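/- Let H_AB = H_A ⊗ H_B and let ρ_AB, σ_AB be full-rank states. Then D(ρ_AB‖σ_AB) ≤ D^E_A(ρ_AB‖σ_AB) + D^E_B(ρ_AB‖σ_AB) + log Tr[M], where M = exp(−log σ_AB + log E*_A(ρ_AB) + log E*_B(ρ_AB)). Equality (both sides equal to zero) holds if ρ_AB = σ_AB. -/

import Mathlib

open Matrix
open scoped Kronecker ComplexOrder

noncomputable section

/-- Apply a scalar function to a Hermitian matrix via its spectral decomposition
(junk value `0` if the matrix is not Hermitian). -/
def herFun {n : Type*} [Fintype n] [DecidableEq n] (f : ℝ → ℂ) (M : Matrix n n ℂ) :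
    Matrix n n ℂ :=
  if hM : M.IsHermitian then
    (hM.eigenvectorUnitary : Matrix n n ℂ) *
      Matrix.diagonal (fun i => f (hM.eigenvalues i)) *
      star (hM.eigenvectorUnitary : Matrix n n ℂ)
  else 0

/-- Matrix logarithm (of a positive definite Hermitian matrix). -/
def matLog {n : Type*} [Fintype n] [DecidableEq n] (M : Matrix n n ℂ) : Matrix n n ℂ :=
  herFun (fun x => (Real.log x : ℂ)) M

/-- Real powers of a positive (semi)definite matrix. -/
def matRpow {n : Type*} [Fintype n] [DecidableEq n] (M : Matrix n n ℂ) (r : ℝ) :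
    Matrix n n ℂ :=
  herFun (fun x => ((x ^ r : ℝ) : ℂ)) M

/-- Complex powers of a positive definite matrix. -/
def matCpow {n : Type*} [Fintype n] [DecidableEq n] (M : Matrix n n ℂ) (z : ℂ) :
    Matrix n n ℂ :=
  herFun (fun x => (x : ℂ) ^ z) M

/-- Matrix exponential of a Hermitian matrix. -/
def matExp {n : Type*} [Fintype n] [DecidableEq n] (M : Matrix n n ℂ) : Matrix n n ℂ :=
  herFun (fun x => (Real.exp x : ℂ)) M

/-- Quantum relative entropy `D(ρ‖σ) = Tr[ρ (log ρ − log σ)]`. -/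
def relEnt {n : Type*} [Fintype n] [DecidableEq n] (ρ σ : Matrix n n ℂ) : ℝ :=
  ((ρ * (matLog ρ - matLog σ)).trace).re

/-- Von Neumann entropy `S(ρ) = −Tr[ρ log ρ]`. -/
def vN {n : Type*} [Fintype n] [DecidableEq n] (ρ : Matrix n n ℂ) : ℝ :=
  -((ρ * matLog ρ).trace).re

/-- Operator norm (`‖·‖_∞`, the L2→L2 norm) of a matrix. -/
def opNorm {n : Type*} [Fintype n] [DecidableEq n] (M : Matrix n n ℂ) : ℝ :=
  ‖Matrix.toEuclideanCLM (𝕜 := ℂ) M‖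

/-- Partial trace over the first tensor factor. -/
def ptA {A B : Type*} [Fintype A] [Fintype B] (ρ : Matrix (A × B) (A × B) ℂ) :
    Matrix B B ℂ :=
  Matrix.of fun b b' => ∑ a, ρ (a, b) (a, b')

/-- Partial trace over the second tensor factor. -/
def ptB {A B : Type*} [Fintype A] [Fintype B] (ρ : Matrix (A × B) (A × B) ℂ) :
    Matrix A A ℂ :=
  Matrix.of fun a a' => ∑ b, ρ (a, b) (a', b)

/-- The Petz recovery map of `Tr_A` with respect to `σ`:
`E*_A(ρ) = σ^{1/2} (𝟙_A ⊗ σ_B^{-1/2} ρ_B σ_B^{-1/2}) σ^{1/2}`. -/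
def petzA {A B : Type*} [Fintype A] [Fintype B] [DecidableEq A] [DecidableEq B]
    (σ ρ : Matrix (A × B) (A × B) ℂ) : Matrix (A × B) (A × B) ℂ :=
  matRpow σ (1/2) *
    ((1 : Matrix A A ℂ) ⊗ₖ (matRpow (ptA σ) (-(1/2)) * ptA ρ * matRpow (ptA σ) (-(1/2)))) *
    matRpow σ (1/2)

/-- The Petz recovery map of `Tr_B` with respect to `σ`. -/
def petzB {A B : Type*} [Fintype A] [Fintype B] [DecidableEq A] [DecidableEq B]
    (σ ρ : Matrix (A × B) (A × B) ℂ) : Matrix (A × B) (A × B) ℂ :=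
  matRpow σ (1/2) *
    ((matRpow (ptB σ) (-(1/2)) * ptB ρ * matRpow (ptB σ) (-(1/2))) ⊗ₖ (1 : Matrix B B ℂ)) *
    matRpow σ (1/2)

/-- Mutual information of a bipartite state. -/
def mutualInfo {A B : Type*} [Fintype A] [Fintype B] [DecidableEq A] [DecidableEq B]
    (ρ : Matrix (A × B) (A × B) ℂ) : ℝ :=
  relEnt ρ (ptB ρ ⊗ₖ ptA ρ)

/-- The matrix `M = exp(−log σ + log E*_A(ρ) + log E*_B(ρ))`. -/
def lieM {A B : Type*} [Fintype A] [Fintype B] [DecidableEq A] [DecidableEq B]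
    (σ ρ : Matrix (A × B) (A × B) ℂ) : Matrix (A × B) (A × B) ℂ :=
  matExp (-(matLog σ) + matLog (petzA σ ρ) + matLog (petzB σ ρ))


section QFAux

variable {n : Type*} [Fintype n] [DecidableEq n]

lemma contOn_spectrum (M : Matrix n n ℂ) (f : ℝ → ℝ) : ContinuousOn f (spectrum ℝ M) := by
  rw [continuousOn_iff_continuous_restrict]
  have : Finite (spectrum ℝ M) := M.finite_real_spectrum
  exact continuous_of_discreteTopology

lemma contOn_finite {s : Set ℝ} (hs : s.Finite) (f : ℝ → ℝ) : ContinuousOn f s := by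
  rw [continuousOn_iff_continuous_restrict]
  have : Finite s := hs
  exact continuous_of_discreteTopology

lemma herFun_eq_cfc (f : ℝ → ℝ) {M : Matrix n n ℂ} (hM : M.IsHermitian) :
    herFun (fun x => (f x : ℂ)) M = cfc f M := by
  rw [Matrix.IsHermitian.cfc_eq hM, Matrix.IsHermitian.cfc, herFun, dif_pos hM]
  rfl

lemma herFun_isHermitian (f : ℝ → ℝ) (M : Matrix n n ℂ) :
    (herFun (fun x => (f x : ℂ)) M).IsHermitian := by
  unfold herFun
  split
  · rename_i hM
    show _ᴴ = _
    rw [star_eq_conjTranspose, conjTranspose_mul, conjTranspose_mul,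
      conjTranspose_conjTranspose, diagonal_conjTranspose]
    have : star (fun i => ((f (hM.eigenvalues i) : ℝ) : ℂ)) =
        fun i => ((f (hM.eigenvalues i) : ℝ) : ℂ) := by
      funext i
      simp [Pi.star_apply, Complex.conj_ofReal]
    rw [this, mul_assoc]
  · exact isHermitian_zero

lemma matLog_isHermitian (M : Matrix n n ℂ) : (matLog M).IsHermitian :=
  herFun_isHermitian Real.log M

lemma conjU_posDef {U : Matrix n n ℂ}
    (hU : U ∈ Matrix.unitaryGroup n ℂ) {D : Matrix n n ℂ} (hD : D.PosDef) :
    (U * D * star U).PosDef := by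
  have h2 : U * star U = 1 := Unitary.mul_star_self_of_mem hU
  refine posDef_iff_dotProduct_mulVec.mpr ⟨?_, ?_⟩
  · have hState : Dᴴ = D := hD.1
    show (U * D * star U)ᴴ = _
    rw [star_eq_conjTranspose, conjTranspose_mul, conjTranspose_mul, conjTranspose_conjTranspose,
      hState, mul_assoc]
  · intro x hx
    have key : star x ⬝ᵥ (U * D * star U) *ᵥ x = star (star U *ᵥ x) ⬝ᵥ D *ᵥ (star U *ᵥ x) := by
      rw [star_mulVec, ← mulVec_mulVec, ← mulVec_mulVec, dotProduct_mulVec (star x)]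
      simp [star_eq_conjTranspose]
    rw [key]
    apply (posDef_iff_dotProduct_mulVec.mp hD).2
    intro h0
    apply hx
    have h3 : U *ᵥ (star U *ᵥ x) = U *ᵥ 0 := by rw [h0]
    rwa [mulVec_mulVec, h2, one_mulVec, mulVec_zero] at h3

lemma matExp_posDef {H : Matrix n n ℂ} (hH : H.IsHermitian) : (matExp H).PosDef := by
  rw [matExp, herFun, dif_pos hH]
  refine conjU_posDef (hH.eigenvectorUnitary).2 (Matrix.PosDef.diagonal fun i => ?_)
  exact Complex.zero_lt_real.mpr (Real.exp_pos _)

lemma matLog_matExp {H : Matrix n n ℂ} (hH : H.IsHermitian) : matLog (matExp H) = H := by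
  have hsa : IsSelfAdjoint H := hH.isSelfAdjoint
  rw [matExp, herFun_eq_cfc Real.exp hH]
  have h2 : IsSelfAdjoint (cfc Real.exp H) := cfc_predicate Real.exp H
  have h2' : (cfc Real.exp H).IsHermitian := h2
  rw [matLog, herFun_eq_cfc Real.log h2']
  rw [← cfc_comp Real.log Real.exp H hsa
    (contOn_finite ((Matrix.finite_real_spectrum (A := H)).image _) _) (contOn_spectrum H _)]
  have : Real.log ∘ Real.exp = id := by funext x; simp [Real.log_exp]
  rw [this, cfc_id ℝ H hsa]

lemma matExp_matLog {M : Matrix n n ℂ} (hM : M.PosDef) : matExp (matLog M) = M := by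
  have hsa : IsSelfAdjoint M := hM.1.isSelfAdjoint
  have hspec : spectrum ℝ M ⊆ Set.Ioi (0 : ℝ) := by
    rw [Matrix.IsHermitian.spectrum_real_eq_range_eigenvalues hM.1]
    rintro - ⟨i, rfl⟩
    exact hM.eigenvalues_pos i
  rw [matLog, herFun_eq_cfc Real.log hM.1]
  have h2 : IsSelfAdjoint (cfc Real.log M) := cfc_predicate Real.log M
  have h2' : (cfc Real.log M).IsHermitian := h2
  rw [matExp, herFun_eq_cfc Real.exp h2']
  rw [← cfc_comp Real.exp Real.log M hsa
    (contOn_finite ((Matrix.finite_real_spectrum (A := M)).image _) _) (contOn_spectrum M _)]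
  have : (spectrum ℝ M).EqOn (Real.exp ∘ Real.log) id := by
    intro x hx
    exact Real.exp_log (hspec hx)
  rw [cfc_congr this, cfc_id ℝ M hsa]

lemma matRpow_half_mul {M : Matrix n n ℂ} (hM : M.PosDef) :
    matRpow M (1/2) * matRpow M (1/2) = M := by
  have hsa : IsSelfAdjoint M := hM.1.isSelfAdjoint
  have hspec : spectrum ℝ M ⊆ Set.Ioi (0 : ℝ) := by
    rw [Matrix.IsHermitian.spectrum_real_eq_range_eigenvalues hM.1]
    rintro - ⟨i, rfl⟩
    exact hM.eigenvalues_pos i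
  rw [matRpow, herFun_eq_cfc (fun x => x ^ ((1:ℝ)/2)) hM.1]
  rw [← cfc_mul _ _ M (contOn_spectrum M _) (contOn_spectrum M _)]
  have : (spectrum ℝ M).EqOn (fun x => x ^ ((1:ℝ)/2) * x ^ ((1:ℝ)/2)) id := by
    intro x hx
    have hx' : (0:ℝ) < x := hspec hx
    simp only [id]
    rw [← Real.rpow_add hx']
    norm_num
  rw [cfc_congr this, cfc_id ℝ M hsa]

lemma matRpow_sandwich {M : Matrix n n ℂ} (hM : M.PosDef) :
    matRpow M (-(1/2)) * M * matRpow M (-(1/2)) = 1 := by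
  have hsa : IsSelfAdjoint M := hM.1.isSelfAdjoint
  have hspec : spectrum ℝ M ⊆ Set.Ioi (0 : ℝ) := by
    rw [Matrix.IsHermitian.spectrum_real_eq_range_eigenvalues hM.1]
    rintro - ⟨i, rfl⟩
    exact hM.eigenvalues_pos i
  rw [matRpow, herFun_eq_cfc (fun x => x ^ (-((1:ℝ)/2))) hM.1]
  nth_rewrite 2 [← cfc_id ℝ M hsa]
  rw [← cfc_mul _ _ M (contOn_spectrum M _) (contOn_spectrum M _),
    ← cfc_mul _ _ M (contOn_spectrum M _) (contOn_spectrum M _)]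
  rw [← cfc_const_one ℝ M hsa]
  apply cfc_congr
  intro x hx
  have hx' : (0:ℝ) < x := hspec hx
  show _ = (1:ℝ)
  simp only [id]
  rw [show ∀ a b c : ℝ, a * b * c = a * c * b from fun a b c => by ring,
    ← Real.rpow_add hx']
  norm_num
  rw [Real.rpow_neg_one]
  exact inv_mul_cancel₀ hx'.ne'

lemma klein_scalar (c : n → n → ℝ) (p m : n → ℝ)
    (hc : ∀ i j, 0 ≤ c i j) (hrow : ∀ i, ∑ j, c i j = 1) (hcol : ∀ j, ∑ i, c i j = 1)
    (hp : ∀ i, 0 < p i) (hm : ∀ j, 0 < m j) (hps : ∑ i, p i = 1) :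
    -Real.log (∑ j, m j) ≤
      (∑ i, p i * Real.log (p i)) - ∑ i, ∑ j, c i j * (p i * Real.log (m j)) := by
  have hne : Nonempty n := by
    by_contra h
    rw [not_nonempty_iff] at h
    simp at hps
  set t := ∑ j, m j with ht
  have htpos : 0 < t := Finset.sum_pos (fun j _ => hm j) Finset.univ_nonempty
  have e1 : ∑ i, ∑ j, c i j * p i = 1 := by
    have h : ∀ i, ∑ j, c i j * p i = p i := fun i => by
      rw [← Finset.sum_mul, hrow i, one_mul]
    simp_rw [h]; exact hps
  have e2 : ∑ i, ∑ j, c i j * (m j / t) = 1 := by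
    rw [Finset.sum_comm]
    have h : ∀ j, ∑ i, c i j * (m j / t) = m j / t := fun j => by
      rw [← Finset.sum_mul, hcol j, one_mul]
    simp_rw [h]
    rw [← Finset.sum_div, ← ht, div_self htpos.ne']
  have e3 : ∑ i, ∑ j, c i j * (p i * Real.log t) = Real.log t := by
    have h : ∀ i, ∑ j, c i j * (p i * Real.log t) = p i * Real.log t := fun i => by
      rw [← Finset.sum_mul, hrow i, one_mul]
    simp_rw [h]
    rw [← Finset.sum_mul, hps, one_mul]
  have e4 : ∑ i, p i * Real.log (p i) = ∑ i, ∑ j, c i j * (p i * Real.log (p i)) := by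
    refine Finset.sum_congr rfl fun i _ => ?_
    rw [← Finset.sum_mul, hrow i, one_mul]
  have key : ∀ i j, c i j * p i - c i j * (m j / t) - c i j * (p i * Real.log t) ≤
      c i j * (p i * Real.log (p i)) - c i j * (p i * Real.log (m j)) := by
    intro i j
    have h1 : Real.log (m j / t) - Real.log (p i) ≤ (m j / t) / p i - 1 := by
      have h0 := Real.log_le_sub_one_of_pos (div_pos (div_pos (hm j) htpos) (hp i))
      rwa [Real.log_div (div_pos (hm j) htpos).ne' (hp i).ne'] at h0
    have h2 : p i * (Real.log (m j / t) - Real.log (p i)) ≤ m j / t - p i := by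
      have h := mul_le_mul_of_nonneg_left h1 (hp i).le
      have h' : p i * (m j / t / p i - 1) = m j / t - p i := by
        field_simp [(hp i).ne', htpos.ne']
      linarith
    have h3 : Real.log (m j / t) = Real.log (m j) - Real.log t :=
      Real.log_div (hm j).ne' htpos.ne'
    rw [h3] at h2
    nlinarith [hc i j, mul_le_mul_of_nonneg_left h2 (hc i j)]
  calc -Real.log t
      = (∑ i, ∑ j, c i j * p i) - (∑ i, ∑ j, c i j * (m j / t))
        - ∑ i, ∑ j, c i j * (p i * Real.log t) := by rw [e1, e2, e3]; ring
    _ = ∑ i, ∑ j, (c i j * p i - c i j * (m j / t) - c i j * (p i * Real.log t)) := by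
        simp [Finset.sum_sub_distrib]
    _ ≤ ∑ i, ∑ j, (c i j * (p i * Real.log (p i)) - c i j * (p i * Real.log (m j))) :=
        Finset.sum_le_sum fun i _ => Finset.sum_le_sum fun j _ => key i j
    _ = (∑ i, p i * Real.log (p i)) - ∑ i, ∑ j, c i j * (p i * Real.log (m j)) := by
        rw [e4]; simp [Finset.sum_sub_distrib]

lemma trace_diag_conj (U V : Matrix n n ℂ) (d e : n → ℂ) :
    ((U * Matrix.diagonal d * star U) * (V * Matrix.diagonal e * star V)).trace
      = ∑ i, ∑ j, d i * e j * ((star U * V) i j * star ((star U * V) i j)) := by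
  set W := star U * V with hW
  have h1 : star V * U = star W := by rw [hW, StarMul.star_mul, star_star]
  have h2 : (U * Matrix.diagonal d * star U) * (V * Matrix.diagonal e * star V)
      = U * (Matrix.diagonal d * W * Matrix.diagonal e * star V) := by
    rw [hW]; noncomm_ring
  rw [h2, Matrix.trace_mul_comm]
  have h3 : Matrix.diagonal d * W * Matrix.diagonal e * star V * U
      = Matrix.diagonal d * W * Matrix.diagonal e * star W := by
    rw [mul_assoc _ (star V) U, h1]
  rw [h3, Matrix.trace]
  refine Finset.sum_congr rfl fun i _ => ?_
  rw [Matrix.diag_apply, Matrix.mul_apply]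
  refine Finset.sum_congr rfl fun j _ => ?_
  have h5 : (Matrix.diagonal d * W * Matrix.diagonal e) i j = d i * W i j * e j := by
    rw [Matrix.mul_diagonal, Matrix.diagonal_mul]
  rw [h5]
  simp only [star_eq_conjTranspose, conjTranspose_apply]
  ring

lemma kleinMatrix {ρ M : Matrix n n ℂ}
    (hρ : ρ.PosDef) (hρtr : ρ.trace = 1) (hM : M.PosDef) :
    -Real.log (M.trace.re) ≤ ((ρ * (matLog ρ - matLog M)).trace).re := by
  set U := (hρ.1.eigenvectorUnitary : Matrix n n ℂ) with hUdef
  set V := (hM.1.eigenvectorUnitary : Matrix n n ℂ) with hVdef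
  set p := hρ.1.eigenvalues with hpdef
  set m := hM.1.eigenvalues with hmdef
  have hU1 : star U * U = 1 := Unitary.coe_star_mul_self hρ.1.eigenvectorUnitary
  have hU2 : U * star U = 1 := Unitary.coe_mul_star_self hρ.1.eigenvectorUnitary
  have hV1 : star V * V = 1 := Unitary.coe_star_mul_self hM.1.eigenvectorUnitary
  have hV2 : V * star V = 1 := Unitary.coe_mul_star_self hM.1.eigenvectorUnitary
  have hρs : ρ = U * Matrix.diagonal (fun i => ((p i : ℝ) : ℂ)) * star U := hρ.1.spectral_theorem
  have hMs : M = V * Matrix.diagonal (fun i => ((m i : ℝ) : ℂ)) * star V := hM.1.spectral_theorem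
  have hlρ : matLog ρ = U * Matrix.diagonal (fun i => ((Real.log (p i) : ℝ) : ℂ)) * star U := by
    rw [matLog, herFun, dif_pos hρ.1]
  have hlM : matLog M = V * Matrix.diagonal (fun i => ((Real.log (m i) : ℝ) : ℂ)) * star V := by
    rw [matLog, herFun, dif_pos hM.1]
  set W := star U * V with hWdef
  set c : n → n → ℝ := fun i j => Complex.normSq (W i j) with hcdef
  have hWW : W * star W = 1 := by
    rw [hWdef, StarMul.star_mul, star_star, mul_assoc, ← mul_assoc V, hV2, one_mul, hU1]
  have hWW' : star W * W = 1 := by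
    rw [hWdef, StarMul.star_mul, star_star, mul_assoc, ← mul_assoc U, hU2, one_mul, hV1]
  have hrow : ∀ i, ∑ j, c i j = 1 := by
    intro i
    have h : ((W * star W) i i).re = 1 := by rw [hWW]; simp
    rw [Matrix.mul_apply, Complex.re_sum] at h
    calc ∑ j, c i j = ∑ j, (W i j * star W j i).re := by
          refine Finset.sum_congr rfl fun j _ => ?_
          rw [show star W j i = starRingEnd ℂ (W i j) from rfl, Complex.mul_conj]
          simp [hcdef]
      _ = 1 := h
  have hcol : ∀ j, ∑ i, c i j = 1 := by
    intro j
    have h : ((star W * W) j j).re = 1 := by rw [hWW']; simp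
    rw [Matrix.mul_apply, Complex.re_sum] at h
    calc ∑ i, c i j = ∑ i, (star W j i * W i j).re := by
          refine Finset.sum_congr rfl fun i _ => ?_
          rw [show star W j i = starRingEnd ℂ (W i j) from rfl, mul_comm, Complex.mul_conj]
          simp [hcdef]
      _ = 1 := h
  have htrρ : ∑ i, p i = 1 := by
    have h : ρ.trace = ∑ i, ((p i : ℝ) : ℂ) := by
      rw [hρs, Matrix.trace_mul_cycle, hU1, one_mul, Matrix.trace_diagonal]
    rw [hρtr] at h
    have := congrArg Complex.re h.symm
    rwa [Complex.re_sum, Complex.one_re] at this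
  have htrM : M.trace.re = ∑ j, m j := by
    have h : M.trace = ∑ i, ((m i : ℝ) : ℂ) := by
      rw [hMs, Matrix.trace_mul_cycle, hV1, one_mul, Matrix.trace_diagonal]
    rw [h, Complex.re_sum]
    simp
  have htr1 : ((ρ * matLog ρ).trace).re = ∑ i, p i * Real.log (p i) := by
    rw [hlρ, hρs, trace_diag_conj, hU1, Complex.re_sum]
    refine Finset.sum_congr rfl fun i _ => ?_
    rw [Complex.re_sum]
    rw [Finset.sum_eq_single i]
    · rw [Matrix.one_apply_eq]
      simp [← Complex.ofReal_mul]
    · intro j _ hj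
      simp [Matrix.one_apply, Ne.symm hj]
    · simp
  have htr2 : ((ρ * matLog M).trace).re = ∑ i, ∑ j, c i j * (p i * Real.log (m j)) := by
    rw [hlM, hρs, trace_diag_conj, Complex.re_sum]
    refine Finset.sum_congr rfl fun i _ => ?_
    rw [Complex.re_sum]
    refine Finset.sum_congr rfl fun j _ => ?_
    rw [show star ((star U * V) i j) = starRingEnd ℂ ((star U * V) i j) from rfl,
      Complex.mul_conj]
    rw [show ((star U * V) i j) = W i j from rfl]
    have : ((p i : ℝ) : ℂ) * ((Real.log (m j) : ℝ) : ℂ) * ((Complex.normSq (W i j) : ℝ) : ℂ)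
        = (((p i * Real.log (m j) * c i j : ℝ)) : ℂ) := by
      push_cast; ring
    rw [this, Complex.ofReal_re]
    ring
  have hkey := klein_scalar c p m (fun i j => Complex.normSq_nonneg _) hrow hcol
    (fun i => hρ.eigenvalues_pos i) (fun j => hM.eigenvalues_pos j) htrρ
  have hsplit : ((ρ * (matLog ρ - matLog M)).trace).re
      = ((ρ * matLog ρ).trace).re - ((ρ * matLog M).trace).re := by
    rw [mul_sub, Matrix.trace_sub, Complex.sub_re]
  rw [hsplit, htr1, htr2, htrM]
  exact hkey

variable {A B : Type*} [Fintype A] [Fintype B] [DecidableEq A] [DecidableEq B]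

lemma ptA_posDef [Nonempty A] {σ : Matrix (A × B) (A × B) ℂ} (hσ : σ.PosDef) :
    (ptA σ).PosDef := by
  refine posDef_iff_dotProduct_mulVec.mpr ⟨?_, ?_⟩
  · ext b b'
    show star (ptA σ b' b) = ptA σ b b'
    show star (∑ a, σ (a, b') (a, b)) = ∑ a, σ (a, b) (a, b')
    rw [star_sum]
    refine Finset.sum_congr rfl fun a _ => ?_
    have := congrFun (congrFun hσ.1 (a, b)) (a, b')
    rw [← this]
    rfl
  · intro x hx
    set y : A → (A × B → ℂ) := fun a p => if p.1 = a then x p.2 else 0 with hy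
    have key : star x ⬝ᵥ (ptA σ *ᵥ x) = ∑ a, star (y a) ⬝ᵥ σ *ᵥ (y a) := by
      simp only [dotProduct, mulVec, ptA, Matrix.of_apply, hy, Pi.star_apply,
        Fintype.sum_prod_type, Finset.mul_sum, Finset.sum_mul,
        apply_ite (star : ℂ → ℂ), star_zero, ite_mul, zero_mul, mul_ite, mul_zero,
        Finset.sum_ite_irrel, Finset.sum_const_zero, Finset.sum_ite_eq', Finset.mem_univ, if_true]
      rw [show (∑ x_1 : B, ∑ x_2 : B, ∑ i : A, star (x x_1) * (σ (i, x_1) (i, x_2) * x x_2))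
          = ∑ x_1 : B, ∑ i : A, ∑ x_2 : B, star (x x_1) * (σ (i, x_1) (i, x_2) * x x_2) from
        Finset.sum_congr rfl fun b1 _ => Finset.sum_comm]
      exact Finset.sum_comm
    rw [key]
    have hpos : ∀ a, (0:ℂ) ≤ star (y a) ⬝ᵥ σ *ᵥ (y a) := fun a => hσ.posSemidef.dotProduct_mulVec_nonneg (y a)
    obtain ⟨b0, hb0⟩ := Function.ne_iff.mp hx
    have a0 : A := Classical.arbitrary A
    have hy0 : y a0 ≠ 0 := by
      intro h0
      apply hb0
      have := congrFun h0 (a0, b0)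
      simpa [hy] using this
    exact Finset.sum_pos' (fun a _ => hpos a) ⟨a0, Finset.mem_univ a0, hσ.dotProduct_mulVec_pos hy0⟩

lemma ptB_posDef [Nonempty B] {σ : Matrix (A × B) (A × B) ℂ} (hσ : σ.PosDef) :
    (ptB σ).PosDef := by
  refine posDef_iff_dotProduct_mulVec.mpr ⟨?_, ?_⟩
  · ext a a'
    show star (ptB σ a' a) = ptB σ a a'
    show star (∑ b, σ (a', b) (a, b)) = ∑ b, σ (a, b) (a', b)
    rw [star_sum]
    refine Finset.sum_congr rfl fun b _ => ?_
    have := congrFun (congrFun hσ.1 (a, b)) (a', b)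
    rw [← this]
    rfl
  · intro x hx
    set y : B → (A × B → ℂ) := fun b p => if p.2 = b then x p.1 else 0 with hy
    have key : star x ⬝ᵥ (ptB σ *ᵥ x) = ∑ b, star (y b) ⬝ᵥ σ *ᵥ (y b) := by
      simp only [dotProduct, mulVec, ptB, Matrix.of_apply, hy, Pi.star_apply,
        Fintype.sum_prod_type, Finset.mul_sum, Finset.sum_mul,
        apply_ite (star : ℂ → ℂ), star_zero, ite_mul, zero_mul, mul_ite, mul_zero,
        Finset.sum_ite_irrel, Finset.sum_const_zero, Finset.sum_ite_eq', Finset.mem_univ, if_true]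
      rw [show (∑ a1 : A, ∑ a2 : A, ∑ b : B, star (x a1) * (σ (a1, b) (a2, b) * x a2))
          = ∑ a1 : A, ∑ b : B, ∑ a2 : A, star (x a1) * (σ (a1, b) (a2, b) * x a2) from
        Finset.sum_congr rfl fun a1 _ => Finset.sum_comm]
      exact Finset.sum_comm
    rw [key]
    have hpos : ∀ b, (0:ℂ) ≤ star (y b) ⬝ᵥ σ *ᵥ (y b) := fun b => hσ.posSemidef.dotProduct_mulVec_nonneg (y b)
    obtain ⟨a0, ha0⟩ := Function.ne_iff.mp hx
    have b0 : B := Classical.arbitrary B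
    have hy0 : y b0 ≠ 0 := by
      intro h0
      apply ha0
      have := congrFun h0 (a0, b0)
      simpa [hy] using this
    exact Finset.sum_pos' (fun b _ => hpos b) ⟨b0, Finset.mem_univ b0, hσ.dotProduct_mulVec_pos hy0⟩

end QFAux

/-- **Step 1.** `D(ρ_AB‖σ_AB) ≤ D^E_A(ρ_AB‖σ_AB) + D^E_B(ρ_AB‖σ_AB) + log Tr[M]`
with `M = exp(−log σ_AB + log E*_A(ρ_AB) + log E*_B(ρ_AB))`; equality (both sides zero)
if `ρ_AB = σ_AB`. -/
theorem quasiFactorization_step1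
    {A B : Type*} [Fintype A] [Fintype B] [DecidableEq A] [DecidableEq B]
    (ρ σ : Matrix (A × B) (A × B) ℂ)
    (hρ : ρ.PosDef) (hρtr : ρ.trace = 1) (hσ : σ.PosDef) (hσtr : σ.trace = 1) :
    relEnt ρ σ ≤
      relEnt ρ (petzA σ ρ) + relEnt ρ (petzB σ ρ) + Real.log ((lieM σ ρ).trace.re) ∧
    (ρ = σ → relEnt ρ σ = 0 ∧
      relEnt ρ (petzA σ ρ) + relEnt ρ (petzB σ ρ) + Real.log ((lieM σ ρ).trace.re) = 0) := by
  constructor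
  · set H := -(matLog σ) + matLog (petzA σ ρ) + matLog (petzB σ ρ) with hHdef
    have hH : H.IsHermitian :=
      (((matLog_isHermitian σ).neg).add (matLog_isHermitian _)).add (matLog_isHermitian _)
    have hMpos : (lieM σ ρ).PosDef := matExp_posDef hH
    have hlog : matLog (lieM σ ρ) = H := matLog_matExp hH
    have hklein := kleinMatrix hρ hρtr hMpos
    rw [hlog] at hklein
    have hmat : (matLog ρ - matLog (petzA σ ρ)) + (matLog ρ - matLog (petzB σ ρ))
        - (matLog ρ - matLog σ) = matLog ρ - H := by rw [hHdef]; abel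
    have hexpand : ((ρ * (matLog ρ - H)).trace).re
        = relEnt ρ (petzA σ ρ) + relEnt ρ (petzB σ ρ) - relEnt ρ σ := by
      show _ = ((ρ * (matLog ρ - matLog (petzA σ ρ))).trace).re
          + ((ρ * (matLog ρ - matLog (petzB σ ρ))).trace).re
          - ((ρ * (matLog ρ - matLog σ)).trace).re
      rw [← Complex.add_re, ← Complex.sub_re, ← Matrix.trace_add, ← Matrix.trace_sub,
        ← mul_add, ← mul_sub, hmat]
    rw [hexpand] at hklein
    linarith
  · intro heq
    subst heq
    have hne : Nonempty (A × B) := by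
      by_contra h
      rw [not_nonempty_iff] at h
      rw [Matrix.trace] at hρtr
      simp [Finset.univ_eq_empty] at hρtr
    have hA : Nonempty A := ⟨(Classical.arbitrary (A × B)).1⟩
    have hB : Nonempty B := ⟨(Classical.arbitrary (A × B)).2⟩
    have hre : relEnt ρ ρ = 0 := by
      show ((ρ * (matLog ρ - matLog ρ)).trace).re = 0
      rw [sub_self, mul_zero, Matrix.trace_zero]
      rfl
    have hpA : petzA ρ ρ = ρ := by
      show matRpow ρ (1/2) * ((1 : Matrix A A ℂ) ⊗ₖ
        (matRpow (ptA ρ) (-(1/2)) * ptA ρ * matRpow (ptA ρ) (-(1/2)))) * matRpow ρ (1/2) = ρ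
      rw [matRpow_sandwich (ptA_posDef hρ), Matrix.one_kronecker_one, mul_one,
        matRpow_half_mul hρ]
    have hpB : petzB ρ ρ = ρ := by
      show matRpow ρ (1/2) * ((matRpow (ptB ρ) (-(1/2)) * ptB ρ * matRpow (ptB ρ) (-(1/2)))
        ⊗ₖ (1 : Matrix B B ℂ)) * matRpow ρ (1/2) = ρ
      rw [matRpow_sandwich (ptB_posDef hρ), Matrix.one_kronecker_one, mul_one,
        matRpow_half_mul hρ]
    have hlie : lieM ρ ρ = ρ := by
      show matExp (-(matLog ρ) + matLog (petzA ρ ρ) + matLog (petzB ρ ρ)) = ρ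
      rw [hpA, hpB, show -(matLog ρ) + matLog ρ + matLog ρ = matLog ρ from by abel,
        matExp_matLog hρ]
    refine ⟨hre, ?_⟩
    rw [hpA, hpB, hre, hlie, hρtr]
    simp [Real.log_one]

end
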